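/- arXiv:1701.03315 — 9 statements merged into one kernel-verified Lean document; each statement's English description precedes it below -/
import Mathlib

section
/- Let E be a 3×3 complex matrix with Eᵀ = E and trace E = 0, and let s ∈ ℂ with s ≠ 0 and s² = trace(E·E). Then there exists a vector v : Fin 3 → ℂ such that vecMulVec v v = E + (s/√6)·1 if and only if E·E = (s/√6)·E + (s²/3)·1. -/
open Matrix

theorem stmt_0 (E : Matrix (Fin 3) (Fin 3) ℂ) (hsym : Eᵀ = E) (htr : E.trace = 0)
    (s : ℂ) (hs : s ≠ 0) (hs2 : s ^ 2 = (E * E).trace) :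
    (∃ v : Fin 3 → ℂ, vecMulVec v v = E + (s / (Real.sqrt 6 : ℂ)) • (1 : Matrix (Fin 3) (Fin 3) ℂ))
      ↔ E * E = (s / (Real.sqrt 6 : ℂ)) • E + (s ^ 2 / 3) • (1 : Matrix (Fin 3) (Fin 3) ℂ) := by
  obtain ⟨α, hαdef⟩ : ∃ α : ℂ, α = s / (Real.sqrt 6 : ℂ) := ⟨_, rfl⟩
  rw [← hαdef]
  have h6 : ((Real.sqrt 6 : ℝ) : ℂ) ≠ 0 :=
    Complex.ofReal_ne_zero.mpr (ne_of_gt (Real.sqrt_pos.mpr (by norm_num)))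
  have h62 : ((Real.sqrt 6 : ℝ) : ℂ) ^ 2 = 6 := by
    rw [← Complex.ofReal_pow, Real.sq_sqrt (by norm_num : (0:ℝ) ≤ 6)]
    norm_num
  have hα : α ≠ 0 := hαdef ▸ div_ne_zero hs h6
  have hα2 : α ^ 2 * 6 = s ^ 2 := by
    rw [hαdef]
    field_simp
    linear_combination -h62
  have e10 : E 1 0 = E 0 1 := by simpa using congrFun (congrFun hsym 0) 1
  have e20 : E 2 0 = E 0 2 := by simpa using congrFun (congrFun hsym 0) 2
  have e21 : E 2 1 = E 1 2 := by simpa using congrFun (congrFun hsym 1) 2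
  have htr3 : E 0 0 + E 1 1 + E 2 2 = 0 := by simpa [Matrix.trace_fin_three] using htr
  constructor
  · rintro ⟨v, hv⟩
    have g : ∀ i j, vecMulVec v v i j = (E + α • (1 : Matrix (Fin 3) (Fin 3) ℂ)) i j :=
      fun i j => congrFun (congrFun hv i) j
    have g00 := g 0 0; have g01 := g 0 1; have g02 := g 0 2
    have g10 := g 1 0; have g11 := g 1 1; have g12 := g 1 2
    have g20 := g 2 0; have g21 := g 2 1; have g22 := g 2 2
    simp [vecMulVec_apply, Matrix.add_apply, Matrix.smul_apply, Matrix.one_apply] at g00 g01 g02 g10 g11 g12 g20 g21 g22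
    have hE00 : E 0 0 = v 0 * v 0 - α := by linear_combination -g00
    have hE01 : E 0 1 = v 0 * v 1 := g01.symm
    have hE02 : E 0 2 = v 0 * v 2 := g02.symm
    have hE10 : E 1 0 = v 1 * v 0 := g10.symm
    have hE11 : E 1 1 = v 1 * v 1 - α := by linear_combination -g11
    have hE12 : E 1 2 = v 1 * v 2 := g12.symm
    have hE20 : E 2 0 = v 2 * v 0 := g20.symm
    have hE21 : E 2 1 = v 2 * v 1 := g21.symm
    have hE22 : E 2 2 = v 2 * v 2 - α := by linear_combination -g22
    have hT : v 0 * v 0 + v 1 * v 1 + v 2 * v 2 = 3 * α := by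
      linear_combination g00 + g11 + g22 + htr3
    ext i j
    fin_cases i <;> fin_cases j <;>
      simp only [Matrix.mul_apply, Fin.sum_univ_three, Matrix.add_apply, Matrix.smul_apply,
        Matrix.one_apply, Fin.isValue, Fin.reduceFinMk, Fin.reduceEq,
        if_true, if_false, mul_one, mul_zero, add_zero, smul_eq_mul] <;>
      (try norm_num) <;>
      simp only [hE00, hE01, hE02, hE10, hE11, hE12, hE20, hE21, hE22] <;>
      first
        | linear_combination (v 0 * v 0) * hT + (1/3) * hα2
        | linear_combination (v 1 * v 1) * hT + (1/3) * hα2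
        | linear_combination (v 2 * v 2) * hT + (1/3) * hα2
        | linear_combination (v 0 * v 1) * hT
        | linear_combination (v 0 * v 2) * hT
        | linear_combination (v 1 * v 2) * hT
  · intro h
    have h00 := congrFun (congrFun h 0) 0
    have h01 := congrFun (congrFun h 0) 1
    have h02 := congrFun (congrFun h 0) 2
    have h11 := congrFun (congrFun h 1) 1
    have h12 := congrFun (congrFun h 1) 2
    have h22 := congrFun (congrFun h 2) 2
    simp [Matrix.mul_apply, Fin.sum_univ_three, Matrix.add_apply, Matrix.smul_apply,
      Matrix.one_apply] at h00 h01 h02 h11 h12 h22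
    simp only [e10, e20, e21] at h00 h01 h02 h11 h12 h22
    -- minors
    have m1 : E 0 1 * E 0 1 = (E 0 0 + α) * (E 1 1 + α) := by
      linear_combination (1/2) * h00 + (1/2) * h11 - (1/2) * h22 - (1/6) * hα2
        - (1/2) * (E 0 0 + E 1 1 - E 2 2 + α) * htr3
    have m2 : E 0 2 * E 0 2 = (E 0 0 + α) * (E 2 2 + α) := by
      linear_combination (1/2) * h00 - (1/2) * h11 + (1/2) * h22 - (1/6) * hα2
        - (1/2) * (E 0 0 - E 1 1 + E 2 2 + α) * htr3
    have m3 : E 1 2 * E 1 2 = (E 1 1 + α) * (E 2 2 + α) := by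
      linear_combination (-(1/2)) * h00 + (1/2) * h11 + (1/2) * h22 - (1/6) * hα2
        - (1/2) * (-(E 0 0) + E 1 1 + E 2 2 + α) * htr3
    have m4 : E 0 1 * E 0 2 = (E 0 0 + α) * E 1 2 := by
      linear_combination h12 - E 1 2 * htr3
    have m5 : E 0 1 * E 1 2 = (E 1 1 + α) * E 0 2 := by
      linear_combination h02 - E 0 2 * htr3
    have m6 : E 0 2 * E 1 2 = (E 2 2 + α) * E 0 1 := by
      linear_combination h01 - E 0 1 * htr3
    have hdiag : (E 0 0 + α ≠ 0) ∨ (E 1 1 + α ≠ 0) ∨ (E 2 2 + α ≠ 0) := by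
      by_contra hcon
      push_neg at hcon
      have : (3:ℂ) * α = 0 := by
        linear_combination hcon.1 + hcon.2.1 + hcon.2.2 - htr3
      exact hα (by simpa using this)
    rcases hdiag with hA | hD | hF
    · obtain ⟨r, hr⟩ : ∃ r : ℂ, r ^ 2 = E 0 0 + α :=
        ⟨_, Complex.cpow_nat_inv_pow _ (by norm_num : (2:ℕ) ≠ 0)⟩
      refine ⟨![(E 0 0 + α) / r, E 0 1 / r, E 0 2 / r], ?_⟩
      ext i j
      fin_cases i <;> fin_cases j <;>
        simp only [vecMulVec_apply, Matrix.add_apply, Matrix.smul_apply, Matrix.one_apply,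
          Matrix.cons_val_zero, Matrix.cons_val_one, Matrix.head_cons, Matrix.cons_val_two,
          Matrix.tail_cons, Fin.isValue, Fin.reduceFinMk, Fin.reduceEq,
          if_true, if_false, mul_one, mul_zero, add_zero, smul_eq_mul] <;>
        (try norm_num) <;>
        rw [div_mul_div_comm, show r * r = E 0 0 + α from by rw [← hr]; ring,
          div_eq_iff hA] <;>
        first
          | ring1
          | linear_combination m1
          | linear_combination m2
          | linear_combination m3
          | linear_combination m4
          | linear_combination m5
          | linear_combination m6
          | linear_combination (-(E 0 0 + α)) * e10
          | linear_combination (-(E 0 0 + α)) * e20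
          | linear_combination (-(E 0 0 + α)) * e21
          | linear_combination m4 - (E 0 0 + α) * e21
          | linear_combination m5 - (E 0 0 + α) * e20
          | linear_combination m6 - (E 0 0 + α) * e10
    · obtain ⟨r, hr⟩ : ∃ r : ℂ, r ^ 2 = E 1 1 + α :=
        ⟨_, Complex.cpow_nat_inv_pow _ (by norm_num : (2:ℕ) ≠ 0)⟩
      refine ⟨![E 0 1 / r, (E 1 1 + α) / r, E 1 2 / r], ?_⟩
      ext i j
      fin_cases i <;> fin_cases j <;>
        simp only [vecMulVec_apply, Matrix.add_apply, Matrix.smul_apply, Matrix.one_apply,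
          Matrix.cons_val_zero, Matrix.cons_val_one, Matrix.head_cons, Matrix.cons_val_two,
          Matrix.tail_cons, Fin.isValue, Fin.reduceFinMk, Fin.reduceEq,
          if_true, if_false, mul_one, mul_zero, add_zero, smul_eq_mul] <;>
        (try norm_num) <;>
        rw [div_mul_div_comm, show r * r = E 1 1 + α from by rw [← hr]; ring,
          div_eq_iff hD] <;>
        first
          | ring1
          | linear_combination m1
          | linear_combination m2
          | linear_combination m3
          | linear_combination m4
          | linear_combination m5
          | linear_combination m6
          | linear_combination (-(E 1 1 + α)) * e10
          | linear_combination (-(E 1 1 + α)) * e20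
          | linear_combination (-(E 1 1 + α)) * e21
          | linear_combination m4 - (E 1 1 + α) * e21
          | linear_combination m5 - (E 1 1 + α) * e20
          | linear_combination m6 - (E 1 1 + α) * e10
    · obtain ⟨r, hr⟩ : ∃ r : ℂ, r ^ 2 = E 2 2 + α :=
        ⟨_, Complex.cpow_nat_inv_pow _ (by norm_num : (2:ℕ) ≠ 0)⟩
      refine ⟨![E 0 2 / r, E 1 2 / r, (E 2 2 + α) / r], ?_⟩
      ext i j
      fin_cases i <;> fin_cases j <;>
        simp only [vecMulVec_apply, Matrix.add_apply, Matrix.smul_apply, Matrix.one_apply,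
          Matrix.cons_val_zero, Matrix.cons_val_one, Matrix.head_cons, Matrix.cons_val_two,
          Matrix.tail_cons, Fin.isValue, Fin.reduceFinMk, Fin.reduceEq,
          if_true, if_false, mul_one, mul_zero, add_zero, smul_eq_mul] <;>
        (try norm_num) <;>
        rw [div_mul_div_comm, show r * r = E 2 2 + α from by rw [← hr]; ring,
          div_eq_iff hF] <;>
        first
          | ring1
          | linear_combination m1
          | linear_combination m2
          | linear_combination m3
          | linear_combination m4
          | linear_combination m5
          | linear_combination m6
          | linear_combination (-(E 2 2 + α)) * e10
          | linear_combination (-(E 2 2 + α)) * e20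
          | linear_combination (-(E 2 2 + α)) * e21
          | linear_combination m4 - (E 2 2 + α) * e21
          | linear_combination m5 - (E 2 2 + α) * e20
          | linear_combination m6 - (E 2 2 + α) * e10
end

section
/- Let n ∈ ℕ and let M be an n×n complex matrix with Mᵀ = M, M·M = (trace M)·M and trace M ≠ 0. Then there exists a vector v : Fin n → ℂ with M = vecMulVec v v. -/
/-!
`M / tr M` is an idempotent of trace 1, and an idempotent has rank equal to its trace, so
`M = u wᵀ` for some vectors `u`, `w`. Symmetry of `M` forces `w = c u`, and a square root of `c`,
which exists in `ℂ`, is absorbed into `u`.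
-/

open Matrix

namespace Matrix

variable {K m n : Type*} [Field K]

theorem rank_eq_trace_of_isIdempotentElem [Fintype n] [DecidableEq n] {P : Matrix n n K}
    (hP : IsIdempotentElem P) : (P.rank : K) = P.trace := by
  have hf : IsIdempotentElem P.mulVecLin := by
    rw [IsIdempotentElem, Module.End.mul_eq_comp, ← mulVecLin_mul, hP.eq]
  rw [rank, ← (LinearMap.IsIdempotentElem.isProj_range _ hf).trace, ← toLin'_apply',
    trace_toLin'_eq]

theorem exists_eq_vecMulVec_of_rank_le_one [Fintype n] [DecidableEq n] {A : Matrix m n K}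
    (hA : A.rank ≤ 1) : ∃ (u : m → K) (w : n → K), A = vecMulVec u w := by
  obtain ⟨u, hu⟩ := finrank_le_one_iff.mp hA
  choose w hw using fun j => hu ⟨A.col j, by
    rw [← mulVec_single_one]; exact LinearMap.mem_range_self A.mulVecLin _⟩
  refine ⟨u, w, ext fun i j => ?_⟩
  have := congrFun (congrArg Subtype.val (hw j)) i
  simp only [SetLike.val_smul, Pi.smul_apply, smul_eq_mul, col_apply] at this
  rw [vecMulVec_apply, ← this, mul_comm]

theorem exists_eq_smul_of_vecMulVec_comm {u w : n → K} (hu : u ≠ 0)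
    (h : vecMulVec w u = vecMulVec u w) : ∃ c : K, w = c • u := by
  obtain ⟨k, hk⟩ := Function.ne_iff.mp hu
  refine ⟨w k / u k, funext fun j => ?_⟩
  have := congrFun (congrFun h j) k
  simp only [vecMulVec_apply, Pi.smul_apply, smul_eq_mul, Pi.zero_apply] at this hk ⊢
  field_simp
  linear_combination this

theorem exists_vecMulVec_self_eq_smul [IsAlgClosed K] (c : K) (u : n → K) :
    ∃ v : n → K, vecMulVec v v = c • vecMulVec u u := by
  obtain ⟨s, rfl⟩ := IsAlgClosed.exists_eq_mul_self c
  exact ⟨s • u, by rw [smul_vecMulVec, vecMulVec_smul, smul_smul]⟩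

end Matrix

theorem stmt_3 (n : ℕ) (M : Matrix (Fin n) (Fin n) ℂ) (hsym : Mᵀ = M)
    (hM : M * M = M.trace • M) (htr : M.trace ≠ 0) :
    ∃ v : Fin n → ℂ, M = vecMulVec v v := by
  have hP : IsIdempotentElem (M.trace⁻¹ • M) := by
    rw [IsIdempotentElem, smul_mul_smul_comm, hM, smul_smul, inv_mul_cancel_right₀ htr]
  have hrank : (M.trace⁻¹ • M).rank ≤ 1 := by
    have := rank_eq_trace_of_isIdempotentElem hP
    rw [trace_smul, smul_eq_mul, inv_mul_cancel₀ htr] at this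
    exact (Nat.cast_eq_one.mp this).le
  obtain ⟨u, w, huw⟩ := exists_eq_vecMulVec_of_rank_le_one hrank
  have hMuw : M = vecMulVec u (M.trace • w) := by
    rw [vecMulVec_smul, ← huw, smul_inv_smul₀ htr]
  have hu : u ≠ 0 := by
    rintro rfl
    rw [zero_vecMulVec] at hMuw
    exact htr (by rw [hMuw, trace_zero])
  obtain ⟨c, hc⟩ := exists_eq_smul_of_vecMulVec_comm (w := M.trace • w) hu
    (by rw [← transpose_vecMulVec, ← hMuw, hsym])
  obtain ⟨v, hv⟩ := exists_vecMulVec_self_eq_smul c u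
  exact ⟨v, by rw [hMuw, hc, vecMulVec_smul, hv]⟩
end

section
/- Let M be a 3×3 complex matrix with Mᵀ = M, M·M = (trace M)·M and trace M ≠ 0, and let w : Fin 3 → ℂ satisfy (M·w) ⬝ᵥ (M·w) = 1. Then M = (trace M) · vecMulVec (M·w) (M·w). -/
/-!
With `t = trace M`, the vector `v = M w` satisfies `M v = t v` because `M² = t M`. Using `Mᵀ = M`
and `v ⬝ᵥ v = 1`, the matrix `N = M - t vvᵀ` again satisfies `N² = t N`, and its trace is
`t - t = 0`. Hence `t⁻¹ N` is an idempotent of trace `0`, i.e. of rank `0`, so `N = 0`.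
-/

open Matrix

namespace Matrix

variable {n R K : Type*} [Fintype n]

theorem sub_smul_vecMulVec_mul_self [CommRing R] {M : Matrix n n R} {t : R} {v : n → R}
    (hsym : Mᵀ = M) (hM : M * M = t • M) (hv : M *ᵥ v = t • v) (hvv : v ⬝ᵥ v = 1) :
    (M - t • vecMulVec v v) * (M - t • vecMulVec v v) = t • (M - t • vecMulVec v v) := by
  have hvM : v ᵥ* M = t • v := by rw [← mulVec_transpose, hsym, hv]
  have hMV : M * vecMulVec v v = t • vecMulVec v v := by rw [mul_vecMulVec, hv, smul_vecMulVec]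
  have hVM : vecMulVec v v * M = t • vecMulVec v v := by rw [vecMulVec_mul, hvM, vecMulVec_smul]
  have hVV : vecMulVec v v * vecMulVec v v = vecMulVec v v := by
    rw [vecMulVec_mul_vecMulVec, hvv, one_smul]
  simp only [sub_mul, mul_sub, Matrix.smul_mul, Matrix.mul_smul, hM, hMV, hVM, hVV]
  module

variable [DecidableEq n] [Field K] [CharZero K]

theorem eq_zero_of_isIdempotentElem_of_trace_eq_zero {A : Matrix n n K}
    (hA : IsIdempotentElem A) (htr : A.trace = 0) : A = 0 := by
  have hlin : IsIdempotentElem (toLin' A) := hA.map toLinAlgEquiv'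
  have hzero := LinearMap.IsIdempotentElem.eq_zero_of_trace_eq_zero hlin
    (by rwa [trace_toLin'_eq])
  exact toLin'.injective (by rw [hzero, map_zero])

theorem eq_zero_of_mul_self_eq_smul_of_trace_eq_zero {A : Matrix n n K} {t : K}
    (ht : t ≠ 0) (hA : A * A = t • A) (htr : A.trace = 0) : A = 0 := by
  have hidem : IsIdempotentElem (t⁻¹ • A) := by
    rw [IsIdempotentElem, smul_mul_smul_comm, hA, smul_smul, inv_mul_cancel_right₀ ht]
  have hzero := eq_zero_of_isIdempotentElem_of_trace_eq_zero hidem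
    (by rw [trace_smul, htr, smul_zero])
  exact (smul_eq_zero.mp hzero).resolve_left (inv_ne_zero ht)

theorem eq_trace_smul_vecMulVec {M : Matrix n n K} {v : n → K} (hsym : Mᵀ = M)
    (hM : M * M = M.trace • M) (htr : M.trace ≠ 0) (hv : M *ᵥ v = M.trace • v)
    (hvv : v ⬝ᵥ v = 1) : M = M.trace • vecMulVec v v := by
  refine sub_eq_zero.mp (eq_zero_of_mul_self_eq_smul_of_trace_eq_zero htr
    (sub_smul_vecMulVec_mul_self hsym hM hv hvv) ?_)
  rw [trace_sub, trace_smul, trace_vecMulVec, hvv, smul_eq_mul, mul_one, sub_self]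

end Matrix

theorem stmt_4 (M : Matrix (Fin 3) (Fin 3) ℂ) (hsym : Mᵀ = M)
    (hM : M * M = M.trace • M) (htr : M.trace ≠ 0) (w : Fin 3 → ℂ)
    (hw : (M.mulVec w) ⬝ᵥ (M.mulVec w) = 1) :
    M = M.trace • vecMulVec (M.mulVec w) (M.mulVec w) := by
  refine eq_trace_smul_vecMulVec hsym hM htr ?_ hw
  rw [mulVec_mulVec, hM, smul_mulVec]
end

section
/- Let M be a 3×3 complex matrix with Mᵀ = M, M·M = (trace M)·M and trace M ≠ 0. Then there exists a vector w : Fin 3 → ℂ with (M·w) ⬝ᵥ (M·w) = 1. -/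
open Matrix

theorem stmt_5 (M : Matrix (Fin 3) (Fin 3) ℂ) (hsym : Mᵀ = M)
    (hM : M * M = M.trace • M) (htr : M.trace ≠ 0) :
    ∃ w : Fin 3 → ℂ, (M.mulVec w) ⬝ᵥ (M.mulVec w) = 1 := by
  have htr' : ∃ i ∈ Finset.univ, M i i ≠ 0 :=
    Finset.exists_ne_zero_of_sum_ne_zero htr
  obtain ⟨i, -, hi⟩ := htr'
  have hti : M.trace * M i i ≠ 0 := mul_ne_zero htr hi
  obtain ⟨c, hc⟩ := IsAlgClosed.exists_pow_nat_eq (M.trace * M i i)⁻¹ two_pos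
  -- key: (M e_i) ⬝ᵥ (M e_i) = trace M * M i i
  have key : (M.mulVec (Pi.single i 1)) ⬝ᵥ (M.mulVec (Pi.single i 1))
      = M.trace * M i i := by
    have h1 : ∀ j, M.mulVec (Pi.single i 1) j = M j i := by
      intro j
      simp [Matrix.mulVec_single]
    have h2 : (M * M) i i = M.trace * M i i := by rw [hM]; simp
    calc (M.mulVec (Pi.single i 1)) ⬝ᵥ (M.mulVec (Pi.single i 1))
        = ∑ j, M j i * M j i := by
          simp only [dotProduct, h1]
      _ = ∑ j, M i j * M j i := by
          refine Finset.sum_congr rfl fun j _ => ?_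
          have : M i j = M j i := by
            conv_lhs => rw [← hsym]
            rfl
          rw [this]
      _ = (M * M) i i := by simp [Matrix.mul_apply]
      _ = M.trace * M i i := h2
  refine ⟨c • (Pi.single i 1 : Fin 3 → ℂ), ?_⟩
  rw [Matrix.mulVec_smul, smul_dotProduct, dotProduct_smul, key, smul_eq_mul,
    smul_eq_mul, ← mul_assoc, ← pow_two, hc]
  exact inv_mul_cancel₀ hti
end

section
/- Let V be a real normed vector space, U ⊆ V a nonempty open connected set, Λ ∈ ℂ, and let q, p : V → ℂ be differentiable at every point of U, with q x ≠ 0, p x ≠ 0 and q x · p x + Λ ≠ 0 for all x ∈ U. Then the following are equivalent: (a) for every x ∈ U, (4·(q x)·(p x) − 2·Λ)·(p x) • fderiv ℝ q x + ((q x)·(p x) − 5·Λ)·(q x) • fderiv ℝ p x = 0 (an identity of continuous ℝ-linear maps V → ℂ); (b) there exists μ ∈ ℂ with μ ≠ 0 such that for every x ∈ U, ((q x)·(p x) + Λ)⁶ = μ · (q x)² · (p x)⁵. -/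
/-!
The function `(q p + Λ)⁶ / (q² p⁵)` has derivative
`(q p + Λ)⁵ / (q³ p⁶)` times the left-hand side of (a). Since this factor never vanishes on `U`,
(a) says exactly that this function is locally constant on `U`, hence constant on the connected
set `U`, which is (b) after clearing denominators.
-/

open Filter Topology

section FirstIntegral

def firstIntegral {K E : Type*} [Field K] (Λ : K) (q p : E → K) (x : E) : K :=
  (q x * p x + Λ) ^ 6 / (q x ^ 2 * p x ^ 5)

variable {K E : Type*} [Field K] {Λ : K} {q p : E → K} {x : E}

theorem firstIntegral_eq_iff (hq : q x ≠ 0) (hp : p x ≠ 0) {μ : K} :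
    firstIntegral Λ q p x = μ ↔ (q x * p x + Λ) ^ 6 = μ * q x ^ 2 * p x ^ 5 := by
  rw [firstIntegral, div_eq_iff (by simp [hq, hp]), mul_assoc]

theorem firstIntegral_ne_zero (hq : q x ≠ 0) (hp : p x ≠ 0) (hqp : q x * p x + Λ ≠ 0) :
    firstIntegral Λ q p x ≠ 0 :=
  div_ne_zero (pow_ne_zero _ hqp) (by simp [hq, hp])

end FirstIntegral

section Derivative

variable {𝕜 𝕜' E : Type*} [NontriviallyNormedField 𝕜] [NormedField 𝕜'] [NormedAlgebra 𝕜 𝕜']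
  [NormedAddCommGroup E] [NormedSpace 𝕜 E] {Λ : 𝕜'} {q p : E → 𝕜'} {x : E}

theorem hasFDerivAt_firstIntegral {q' p' : E →L[𝕜] 𝕜'} (hq' : HasFDerivAt q q' x)
    (hp' : HasFDerivAt p p' x) (hq : q x ≠ 0) (hp : p x ≠ 0) :
    HasFDerivAt (firstIntegral Λ q p)
      (((q x * p x + Λ) ^ 5 / (q x ^ 3 * p x ^ 6)) •
        (((4 * q x * p x - 2 * Λ) * p x) • q' + ((q x * p x - 5 * Λ) * q x) • p')) x := by
  have hden : q x ^ 2 * p x ^ 5 ≠ 0 := by simp [hq, hp]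
  have hnum := ((hq'.mul hp').add_const Λ).pow 6
  have hinv := (hasFDerivAt_inv' (𝕜 := 𝕜) hden).comp x ((hq'.pow 2).mul (hp'.pow 5))
  convert hnum.mul hinv using 1
  · ext y
    simp [firstIntegral, div_eq_mul_inv]
  · ext v
    simp only [smul_add, add_apply, smul_apply,
      smul_eq_mul, Pi.mul_apply, nsmul_eq_mul, Nat.cast_ofNat, pow_one, Nat.add_one_sub_one,
      ContinuousLinearMap.comp_add, ContinuousLinearMap.neg_comp, smul_neg, Function.comp_apply,
      neg_apply, ContinuousLinearMap.comp_apply,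
      ContinuousLinearMap.mulLeftRight_apply]
    field_simp
    ring

end Derivative

theorem stmt_9_general {V : Type*} [NormedAddCommGroup V] [NormedSpace ℝ V]
    (U : Set V) (hUo : IsOpen U) (hUc : IsConnected U)
    (Λ : ℂ) (q p : V → ℂ)
    (hq : ∀ x ∈ U, DifferentiableAt ℝ q x) (hp : ∀ x ∈ U, DifferentiableAt ℝ p x)
    (hq0 : ∀ x ∈ U, q x ≠ 0) (hp0 : ∀ x ∈ U, p x ≠ 0)
    (hqp : ∀ x ∈ U, q x * p x + Λ ≠ 0) :
    (∀ x ∈ U,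
        ((4 * q x * p x - 2 * Λ) * p x) • fderiv ℝ q x
          + ((q x * p x - 5 * Λ) * q x) • fderiv ℝ p x = 0)
      ↔ (∃ μ : ℂ, μ ≠ 0 ∧ ∀ x ∈ U,
          (q x * p x + Λ) ^ 6 = μ * (q x) ^ 2 * (p x) ^ 5) := by
  have hderiv (x) (hx : x ∈ U) := hasFDerivAt_firstIntegral (Λ := Λ) (hq x hx).hasFDerivAt
    (hp x hx).hasFDerivAt (hq0 x hx) (hp0 x hx)
  constructor
  · intro hode
    obtain ⟨μ, hμ⟩ := hUo.exists_is_const_of_fderiv_eq_zero hUc.isPreconnected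
      (fun x hx ↦ (hderiv x hx).differentiableAt.differentiableWithinAt)
      (fun x hx ↦ by simp [(hderiv x hx).fderiv, hode x hx])
    obtain ⟨x₀, hx₀⟩ := hUc.nonempty
    refine ⟨μ, hμ x₀ hx₀ ▸ firstIntegral_ne_zero (hq0 x₀ hx₀) (hp0 x₀ hx₀) (hqp x₀ hx₀),
      fun x hx ↦ (firstIntegral_eq_iff (hq0 x hx) (hp0 x hx)).1 (hμ x hx)⟩
  · rintro ⟨μ, -, hμ⟩ x hx
    have hconst : firstIntegral Λ q p =ᶠ[𝓝 x] fun _ ↦ μ :=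
      eventually_of_mem (hUo.mem_nhds hx) fun y hy ↦
        (firstIntegral_eq_iff (hq0 y hy) (hp0 y hy)).2 (hμ y hy)
    have hzero := (hderiv x hx).unique ((hasFDerivAt_const μ x).congr_of_eventuallyEq hconst)
    exact (smul_eq_zero.1 hzero).resolve_left (by simp [hq0 x hx, hp0 x hx, hqp x hx])

theorem stmt_9 {V : Type*} [NormedAddCommGroup V] [NormedSpace ℝ V]
    (U : Set V) (hU : U.Nonempty) (hUo : IsOpen U) (hUc : IsConnected U)
    (Λ : ℂ) (q p : V → ℂ)
    (hq : ∀ x ∈ U, DifferentiableAt ℝ q x) (hp : ∀ x ∈ U, DifferentiableAt ℝ p x)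
    (hq0 : ∀ x ∈ U, q x ≠ 0) (hp0 : ∀ x ∈ U, p x ≠ 0)
    (hqp : ∀ x ∈ U, q x * p x + Λ ≠ 0) :
    (∀ x ∈ U,
        ((4 * q x * p x - 2 * Λ) * p x) • fderiv ℝ q x
          + ((q x * p x - 5 * Λ) * q x) • fderiv ℝ p x = 0)
      ↔ (∃ μ : ℂ, μ ≠ 0 ∧ ∀ x ∈ U,
          (q x * p x + Λ) ^ 6 = μ * (q x) ^ 2 * (p x) ^ 5) :=
  stmt_9_general U hUo hUc Λ q p hq hp hq0 hp0 hqp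
end

section
/- Let V be a real normed vector space, U ⊆ V a nonempty open connected set, Λ ∈ ℂ, and let A, p : V → ℂ be differentiable at every point of U, with A x ≠ 0, p x ≠ 0 and A x + (2·Λ/3)·p x ≠ 0 for all x ∈ U. Then the following are equivalent: (a) for every x ∈ U, ((A x) − (Λ/3)·(p x))·(p x) • fderiv ℝ A x = ((7/4)·(A x) + (Λ/6)·(p x))·(A x) • fderiv ℝ p x (an identity of continuous ℝ-linear maps V → ℂ); (b) there exists μ ∈ ℂ with μ ≠ 0 such that for every x ∈ U, ((A x) + (2·Λ/3)·(p x))⁶ = μ · (A x)² · (p x)⁷. -/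
/-! Write `S = A + (2Λ/3) p`. The Wronskian `A²p⁷ · d(S⁶) - S⁶ · d(A²p⁷)` equals `4 S⁵ A p⁶` times
the difference of the two sides of (a). That factor does not vanish on `U`, so (a) says exactly
that `S⁶ / (A²p⁷)` has zero derivative on `U`, i.e., `U` being connected, that it is a constant
`μ`, nonzero because `S` is. -/

theorem HasFDerivAt.div_of_ne_zero {𝕜 𝕜' E : Type*} [NontriviallyNormedField 𝕜]
    [NontriviallyNormedField 𝕜'] [NormedAlgebra 𝕜 𝕜'] [NormedAddCommGroup E] [NormedSpace 𝕜 E]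
    {F G : E → 𝕜'} {F' G' : E →L[𝕜] 𝕜'} {x : E} (hF : HasFDerivAt F F' x)
    (hG : HasFDerivAt G G' x) (hG0 : G x ≠ 0) :
    HasFDerivAt (fun y ↦ F y / G y) ((G x ^ 2)⁻¹ • (G x • F' - F x • G')) x := by
  have hGinv : HasFDerivAt (fun y ↦ (G y)⁻¹) (-(G x ^ 2)⁻¹ • G') x :=
    (hasDerivAt_inv hG0).comp_hasFDerivAt x hG
  simp only [div_eq_mul_inv]
  refine (hF.fun_mul hGinv).congr_fderiv ?_
  ext v
  simp only [add_apply, sub_apply, smul_apply, smul_eq_mul]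
  field_simp
  ring

theorem IsOpen.wronskian_eq_zero_iff_exists_eq_const_mul {𝕜 E : Type*}
    [NontriviallyNormedField 𝕜] [NormedAlgebra ℝ 𝕜] [NormedAddCommGroup E] [NormedSpace ℝ E]
    {F G : E → 𝕜} {U : Set E} (hUo : IsOpen U)
    (hUc : IsPreconnected U) (hF : DifferentiableOn ℝ F U) (hG : DifferentiableOn ℝ G U)
    (hF0 : ∀ x ∈ U, F x ≠ 0) (hG0 : ∀ x ∈ U, G x ≠ 0) :
    (∀ x ∈ U, G x • fderiv ℝ F x = F x • fderiv ℝ G x) ↔ ∃ c ≠ 0, ∀ x ∈ U, F x = c * G x := by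
  have hF' x (hx : x ∈ U) := (hF.differentiableAt (hUo.mem_nhds hx)).hasFDerivAt
  have hG' x (hx : x ∈ U) := (hG.differentiableAt (hUo.mem_nhds hx)).hasFDerivAt
  constructor
  · intro hW
    obtain rfl | ⟨x₀, hx₀⟩ := U.eq_empty_or_nonempty
    · exact ⟨1, one_ne_zero, by simp⟩
    have hquot x (hx : x ∈ U) := (hF' x hx).div_of_ne_zero (hG' x hx) (hG0 x hx)
    have hconst : ∀ x ∈ U, F x / G x = F x₀ / G x₀ := fun x hx ↦
      hUo.is_const_of_fderiv_eq_zero hUc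
        (fun y hy ↦ (hquot y hy).differentiableAt.differentiableWithinAt)
        (fun y hy ↦ by rw [(hquot y hy).fderiv, hW y hy, sub_self, smul_zero, Pi.zero_apply])
        hx hx₀
    refine ⟨F x₀ / G x₀, div_ne_zero (hF0 x₀ hx₀) (hG0 x₀ hx₀), fun x hx ↦ ?_⟩
    rw [← hconst x hx, div_mul_cancel₀ _ (hG0 x hx)]
  · rintro ⟨c, -, hc⟩ x hx
    have hFG : fderiv ℝ F x = c • fderiv ℝ G x :=
      ((hG' x hx).const_mul c |>.congr_of_eventuallyEq
        (Filter.eventuallyEq_of_mem (hUo.mem_nhds hx) hc)).fderiv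
    rw [hFG, hc x hx, smul_comm, mul_smul]

theorem wronskian_eq_smul_defect {V : Type*} [NormedAddCommGroup V] [NormedSpace ℝ V] (Λ : ℂ)
    {A p : V → ℂ} {x : V} (hA : DifferentiableAt ℝ A x) (hp : DifferentiableAt ℝ p x) :
    (A x ^ 2 * p x ^ 7) • fderiv ℝ (fun y ↦ (A y + 2 * Λ / 3 * p y) ^ 6) x
        - (A x + 2 * Λ / 3 * p x) ^ 6 • fderiv ℝ (fun y ↦ A y ^ 2 * p y ^ 7) x
      = (4 * (A x + 2 * Λ / 3 * p x) ^ 5 * A x * p x ^ 6) •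
          (((A x - Λ / 3 * p x) * p x) • fderiv ℝ A x
            - ((7 / 4 * A x + Λ / 6 * p x) * A x) • fderiv ℝ p x) := by
  rw [((hA.hasFDerivAt.fun_add (hp.hasFDerivAt.const_mul _)).pow 6).fderiv,
    ((hA.hasFDerivAt.pow 2).fun_mul (hp.hasFDerivAt.pow 7)).fderiv]
  ext v
  simp only [add_apply, sub_apply, smul_apply, smul_eq_mul, nsmul_eq_mul]
  push_cast
  ring

theorem stmt_10_general {V : Type*} [NormedAddCommGroup V] [NormedSpace ℝ V]
    (U : Set V) (hUo : IsOpen U) (hUc : IsConnected U)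
    (Λ : ℂ) (A p : V → ℂ)
    (hA : ∀ x ∈ U, DifferentiableAt ℝ A x) (hp : ∀ x ∈ U, DifferentiableAt ℝ p x)
    (hA0 : ∀ x ∈ U, A x ≠ 0) (hp0 : ∀ x ∈ U, p x ≠ 0)
    (hAp : ∀ x ∈ U, A x + (2 * Λ / 3) * p x ≠ 0) :
    (∀ x ∈ U,
        ((A x - (Λ / 3) * p x) * p x) • fderiv ℝ A x
          = (((7 / 4) * A x + (Λ / 6) * p x) * A x) • fderiv ℝ p x)
      ↔ (∃ μ : ℂ, μ ≠ 0 ∧ ∀ x ∈ U,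
          (A x + (2 * Λ / 3) * p x) ^ 6 = μ * (A x) ^ 2 * (p x) ^ 7) := by
  have hF : DifferentiableOn ℝ (fun y ↦ (A y + 2 * Λ / 3 * p y) ^ 6) U := fun x hx ↦
    (((hA x hx).add ((hp x hx).const_mul _)).pow 6).differentiableWithinAt
  have hG : DifferentiableOn ℝ (fun y ↦ A y ^ 2 * p y ^ 7) U := fun x hx ↦
    (((hA x hx).pow 2).mul ((hp x hx).pow 7)).differentiableWithinAt
  have hG0 x (hx : x ∈ U) : A x ^ 2 * p x ^ 7 ≠ 0 :=
    mul_ne_zero (pow_ne_zero _ (hA0 x hx)) (pow_ne_zero _ (hp0 x hx))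
  have hdefect : ∀ x ∈ U, ((A x - (Λ / 3) * p x) * p x) • fderiv ℝ A x
        = (((7 / 4) * A x + (Λ / 6) * p x) * A x) • fderiv ℝ p x ↔
      (A x ^ 2 * p x ^ 7) • fderiv ℝ (fun y ↦ (A y + 2 * Λ / 3 * p y) ^ 6) x
        = (A x + 2 * Λ / 3 * p x) ^ 6 • fderiv ℝ (fun y ↦ A y ^ 2 * p y ^ 7) x := fun x hx ↦ by
    have hfactor : 4 * (A x + 2 * Λ / 3 * p x) ^ 5 * A x * p x ^ 6 ≠ 0 := by
      simp [hAp x hx, hA0 x hx, hp0 x hx]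
    rw [← sub_eq_zero, ← smul_eq_zero_iff_right hfactor,
      ← wronskian_eq_smul_defect Λ (hA x hx) (hp x hx), sub_eq_zero]
  rw [forall₂_congr hdefect, hUo.wronskian_eq_zero_iff_exists_eq_const_mul hUc.isPreconnected hF hG
    (fun x hx ↦ pow_ne_zero _ (hAp x hx)) hG0]
  simp only [mul_assoc]

theorem stmt_10 {V : Type*} [NormedAddCommGroup V] [NormedSpace ℝ V]
    (U : Set V) (hU : U.Nonempty) (hUo : IsOpen U) (hUc : IsConnected U)
    (Λ : ℂ) (A p : V → ℂ)
    (hA : ∀ x ∈ U, DifferentiableAt ℝ A x) (hp : ∀ x ∈ U, DifferentiableAt ℝ p x)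
    (hA0 : ∀ x ∈ U, A x ≠ 0) (hp0 : ∀ x ∈ U, p x ≠ 0)
    (hAp : ∀ x ∈ U, A x + (2 * Λ / 3) * p x ≠ 0) :
    (∀ x ∈ U,
        ((A x - (Λ / 3) * p x) * p x) • fderiv ℝ A x
          = (((7 / 4) * A x + (Λ / 6) * p x) * A x) • fderiv ℝ p x)
      ↔ (∃ μ : ℂ, μ ≠ 0 ∧ ∀ x ∈ U,
          (A x + (2 * Λ / 3) * p x) ^ 6 = μ * (A x) ^ 2 * (p x) ^ 7) :=
  stmt_10_general U hUo hUc Λ A p hA hp hA0 hp0 hAp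
end

section
/- Let V be a real normed vector space, Λ ∈ ℂ, w : V → ℂ, and x ∈ V such that w is differentiable at x and w x ≠ 0. Then ((w x)³ − Λ/3) • fderiv ℝ (fun y => 4·((w y)³ − Λ/3)/(w y)²) x = fderiv ℝ (fun y => ((w y)³ + 2·Λ/3)²/(w y)²) x. -/
/-! Both sides are `g ∘ w` for rational functions `g` of one variable, so by the chain rule each
is a scalar multiple of `dw`, and everything reduces to `(z³ - Λ/3) g₁'(z) = g₂'(z)` for
`g₁ = 4(z³ - Λ/3)/z² = 4z - (4Λ/3) z⁻²` and
`g₂ = (z³ + 2Λ/3)²/z² = z⁴ + (4Λ/3) z + (4Λ²/9) z⁻²`. -/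

section

variable {𝕜 : Type*} [NontriviallyNormedField 𝕜] (Λ : 𝕜) {z : 𝕜}

theorem hasDerivAt_four_mul_cube_sub_div_sq (hz : z ≠ 0) :
    HasDerivAt (fun z : 𝕜 => 4 * (z ^ 3 - Λ / 3) / z ^ 2) (4 + 8 * (Λ / 3) / z ^ 3) z := by
  have hnum : HasDerivAt (fun z : 𝕜 => 4 * (z ^ 3 - Λ / 3)) (4 * (3 * z ^ 2)) z := by
    simpa using ((hasDerivAt_pow 3 z).sub_const (Λ / 3)).const_mul (4 : 𝕜)
  have hden : HasDerivAt (fun z : 𝕜 => z ^ 2) (2 * z) z := by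
    simpa using hasDerivAt_pow 2 z
  refine (hnum.div hden (pow_ne_zero 2 hz)).congr_deriv ?_
  field_simp
  ring

theorem hasDerivAt_cube_add_sq_div_sq (hz : z ≠ 0) :
    HasDerivAt (fun z : 𝕜 => (z ^ 3 + 2 * Λ / 3) ^ 2 / z ^ 2)
      ((z ^ 3 - Λ / 3) * (4 + 8 * (Λ / 3) / z ^ 3)) z := by
  have hnum : HasDerivAt (fun z : 𝕜 => (z ^ 3 + 2 * Λ / 3) ^ 2)
      (2 * (z ^ 3 + 2 * Λ / 3) * (3 * z ^ 2)) z := by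
    simpa using ((hasDerivAt_pow 3 z).add_const (2 * Λ / 3)).fun_pow 2
  have hden : HasDerivAt (fun z : 𝕜 => z ^ 2) (2 * z) z := by
    simpa using hasDerivAt_pow 2 z
  refine (hnum.div hden (pow_ne_zero 2 hz)).congr_deriv ?_
  field_simp
  ring

end

theorem stmt_11 {V : Type*} [NormedAddCommGroup V] [NormedSpace ℝ V]
    (Λ : ℂ) (w : V → ℂ) (x : V) (hw : DifferentiableAt ℝ w x) (hw0 : w x ≠ 0) :
    ((w x) ^ 3 - Λ / 3) • fderiv ℝ (fun y => 4 * ((w y) ^ 3 - Λ / 3) / (w y) ^ 2) x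
      = fderiv ℝ (fun y => ((w y) ^ 3 + 2 * Λ / 3) ^ 2 / (w y) ^ 2) x := by
  have h₁ : HasFDerivAt (fun y => 4 * ((w y) ^ 3 - Λ / 3) / (w y) ^ 2)
      ((4 + 8 * (Λ / 3) / (w x) ^ 3) • fderiv ℝ w x) x :=
    (hasDerivAt_four_mul_cube_sub_div_sq Λ hw0).comp_hasFDerivAt x hw.hasFDerivAt
  have h₂ : HasFDerivAt (fun y => ((w y) ^ 3 + 2 * Λ / 3) ^ 2 / (w y) ^ 2)
      ((((w x) ^ 3 - Λ / 3) * (4 + 8 * (Λ / 3) / (w x) ^ 3)) • fderiv ℝ w x) x :=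
    (hasDerivAt_cube_add_sq_div_sq Λ hw0).comp_hasFDerivAt x hw.hasFDerivAt
  rw [h₁.fderiv, h₂.fderiv, smul_smul]
end

section
/- Let m, Λ, a, r, θ ∈ ℝ with m ≠ 0, Λ ≠ 0, a > 0 and 0 ≤ θ ≤ π. Then ((r : ℂ) + (a·cos θ)·i)³ = ((3·m/Λ : ℝ) : ℂ) if and only if either (θ = π/2 and r³ = 3·m/Λ), or (a³·(cos θ)³ = 9·√3·m/(8·Λ) and r = −(a/√3)·cos θ), or (a³·(cos θ)³ = −9·√3·m/(8·Λ) and r = (a/√3)·cos θ). -/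
theorem stmt_13 (m Λ a r θ : ℝ) (hm : m ≠ 0) (hΛ : Λ ≠ 0) (ha : 0 < a)
    (hθ0 : 0 ≤ θ) (hθπ : θ ≤ Real.pi) :
    ((r : ℂ) + ((a * Real.cos θ : ℝ) : ℂ) * Complex.I) ^ 3 = ((3 * m / Λ : ℝ) : ℂ)
      ↔ (θ = Real.pi / 2 ∧ r ^ 3 = 3 * m / Λ)
        ∨ (a ^ 3 * (Real.cos θ) ^ 3 = 9 * Real.sqrt 3 * m / (8 * Λ)
            ∧ r = -(a / Real.sqrt 3) * Real.cos θ)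
        ∨ (a ^ 3 * (Real.cos θ) ^ 3 = -(9 * Real.sqrt 3 * m / (8 * Λ))
            ∧ r = (a / Real.sqrt 3) * Real.cos θ) := by
  have s3 : Real.sqrt 3 ^ 2 = 3 := Real.sq_sqrt (by norm_num)
  have s3pos : (0:ℝ) < Real.sqrt 3 := Real.sqrt_pos.mpr (by norm_num)
  set c := Real.cos θ with hc
  set b := a * c with hb
  have expand : ((r : ℂ) + ((b : ℝ) : ℂ) * Complex.I) ^ 3
      = ((r^3 - 3*r*b^2 : ℝ) : ℂ) + ((3*r^2*b - b^3 : ℝ):ℂ) * Complex.I := by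
    push_cast
    linear_combination (3*(r:ℂ)*((a*c:ℝ):ℂ)^2 + ((a*c:ℝ):ℂ)^3*Complex.I) * Complex.I_sq
  have key : ((r : ℂ) + ((b : ℝ) : ℂ) * Complex.I) ^ 3 = ((3 * m / Λ : ℝ) : ℂ)
      ↔ (r^3 - 3*r*b^2 = 3*m/Λ ∧ 3*r^2*b - b^3 = 0) := by
    rw [expand]
    simp [Complex.ext_iff, ← Complex.ofReal_pow]
  rw [key]
  constructor
  · rintro ⟨h1, h2⟩
    have hfact : b * (3*r^2 - b^2) = 0 := by linear_combination h2
    rcases mul_eq_zero.mp hfact with hb0 | hq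
    · have hcz : c = 0 := by
        rcases mul_eq_zero.mp hb0 with h | h
        · exact absurd h (ne_of_gt ha)
        · exact h
      left
      constructor
      · have hmem1 : θ ∈ Set.Icc 0 Real.pi := ⟨hθ0, hθπ⟩
        have hmem2 : Real.pi / 2 ∈ Set.Icc 0 Real.pi := by
          constructor <;> nlinarith [Real.pi_pos]
        exact Real.injOn_cos hmem1 hmem2 (by rw [← hc, hcz, Real.cos_pi_div_two])
      · have hbz : b = 0 := hb0
        rw [hbz] at h1; linarith [h1]
    · have hsplit : (Real.sqrt 3 * r - b) * (Real.sqrt 3 * r + b) = 0 := by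
        nlinarith [hq, s3]
      rcases mul_eq_zero.mp hsplit with h | h
      · right; right
        have hrb : b = Real.sqrt 3 * r := by linarith
        have hr : r = (a / Real.sqrt 3) * c := by
          field_simp
          linear_combination -hrb + hb
        refine ⟨?_, hr⟩
        have hr3 : -8 * r^3 = 3*m/Λ := by
          have hbb : b^2 = 3*r^2 := by rw [hrb]; linear_combination r^2 * s3
          linear_combination h1 + 3*r*hbb
        field_simp
        have hac : a^3*c^3 = 3*Real.sqrt 3 * r^3 := by
          have hb3 : b^3 = 3*Real.sqrt 3 * r^3 := by
            rw [hrb]; linear_combination (Real.sqrt 3 * r^3) * s3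
          linear_combination hb3
        rw [hac]
        have hr3' : r^3 = -(3*m)/(8*Λ) := by field_simp at hr3 ⊢; linarith
        rw [hr3']; field_simp; ring
      · right; left
        have hrb : b = -(Real.sqrt 3 * r) := by linarith
        have hr : r = -(a / Real.sqrt 3) * c := by
          field_simp
          linear_combination hrb - hb
        refine ⟨?_, hr⟩
        have hr3 : -8 * r^3 = 3*m/Λ := by
          have hbb : b^2 = 3*r^2 := by rw [hrb]; linear_combination r^2 * s3
          linear_combination h1 + 3*r*hbb
        field_simp
        have hac : a^3*c^3 = -(3*Real.sqrt 3 * r^3) := by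
          have hb3 : b^3 = -(3*Real.sqrt 3 * r^3) := by
            rw [hrb]; linear_combination (-(Real.sqrt 3) * r^3) * s3
          linear_combination hb3
        rw [hac]
        have hr3' : r^3 = -(3*m)/(8*Λ) := by field_simp at hr3 ⊢; linarith
        rw [hr3']; field_simp; ring
  · rintro (⟨hθ, hr⟩ | ⟨hcc, hr⟩ | ⟨hcc, hr⟩)
    · have hcz : c = 0 := by rw [hc, hθ, Real.cos_pi_div_two]
      have hbz : b = 0 := by rw [hb, hcz]; ring
      rw [hbz]
      constructor
      · rw [hr]; ring
      · ring
    · have hrb : b = -(Real.sqrt 3 * r) := by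
        rw [hr, hb]; field_simp
      have hb2 : b ^ 2 = 3 * r ^ 2 := by
        rw [hrb]; linear_combination r^2 * s3
      have hr3 : b ^ 3 = -(3 * Real.sqrt 3 * r ^ 3) := by
        rw [hrb]; linear_combination (-(Real.sqrt 3) * r^3) * s3
      have h9 : Real.sqrt 3 * (3 * r ^ 3) = Real.sqrt 3 * (-(9 * m) / (8 * Λ)) := by
        linear_combination hr3 - hcc
      have h10 : 3 * r ^ 3 = -(9 * m) / (8 * Λ) :=
        mul_left_cancel₀ (ne_of_gt s3pos) h9
      have hr3' : r ^ 3 = -(3 * m) / (8 * Λ) := by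
        field_simp at h10 ⊢; linarith
      constructor
      · rw [hb2]; linear_combination (-8 : ℝ) * hr3'
      · linear_combination -b * hb2
    · have hrb : b = Real.sqrt 3 * r := by
        rw [hr, hb]; field_simp
      have hb2 : b ^ 2 = 3 * r ^ 2 := by
        rw [hrb]; linear_combination r^2 * s3
      have hr3 : b ^ 3 = 3 * Real.sqrt 3 * r ^ 3 := by
        rw [hrb]; linear_combination (Real.sqrt 3 * r^3) * s3
      have h9 : Real.sqrt 3 * (3 * r ^ 3) = Real.sqrt 3 * (-(9 * m) / (8 * Λ)) := by
        linear_combination -hr3 + hcc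
      have h10 : 3 * r ^ 3 = -(9 * m) / (8 * Λ) :=
        mul_left_cancel₀ (ne_of_gt s3pos) h9
      have hr3' : r ^ 3 = -(3 * m) / (8 * Λ) := by
        field_simp at h10 ⊢; linarith
      constructor
      · rw [hb2]; linear_combination (-8 : ℝ) * hr3'
      · linear_combination -b * hb2
end

section
/- Let m, Λ, a, r, θ ∈ ℝ with m ≠ 0, Λ ≠ 0, a > 0 and 0 ≤ θ ≤ π. Then ((r : ℂ) + (a·cos θ)·i)³ = ((−6·m/Λ : ℝ) : ℂ) if and only if either (θ = π/2 and r³ = −6·m/Λ), or (a³·(cos θ)³ = 9·√3·m/(4·Λ) and r = (a/√3)·cos θ), or (a³·(cos θ)³ = −9·√3·m/(4·Λ) and r = −(a/√3)·cos θ). -/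
lemma aux_complex_eq (x y c : ℝ) :
    ((x : ℂ) + (y : ℂ) * Complex.I = (c : ℂ)) ↔ (x = c ∧ y = 0) := by
  rw [Complex.ext_iff]
  simp

theorem stmt_14 (m Λ a r θ : ℝ) (hm : m ≠ 0) (hΛ : Λ ≠ 0) (ha : 0 < a)
    (hθ0 : 0 ≤ θ) (hθπ : θ ≤ Real.pi) :
    ((r : ℂ) + ((a * Real.cos θ : ℝ) : ℂ) * Complex.I) ^ 3 = ((-6 * m / Λ : ℝ) : ℂ)
      ↔ (θ = Real.pi / 2 ∧ r ^ 3 = -6 * m / Λ)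
        ∨ (a ^ 3 * (Real.cos θ) ^ 3 = 9 * Real.sqrt 3 * m / (4 * Λ)
            ∧ r = (a / Real.sqrt 3) * Real.cos θ)
        ∨ (a ^ 3 * (Real.cos θ) ^ 3 = -(9 * Real.sqrt 3 * m / (4 * Λ))
            ∧ r = -(a / Real.sqrt 3) * Real.cos θ) := by
  set s : ℝ := Real.sqrt 3 with hsdef
  set b : ℝ := a * Real.cos θ with hb
  have hs : s > 0 := Real.sqrt_pos.mpr (by norm_num)
  have hs0 : s ≠ 0 := ne_of_gt hs
  have hs2 : s ^ 2 = 3 := Real.sq_sqrt (by norm_num)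
  have hs3 : s ^ 3 = 3 * s := by rw [pow_succ, hs2]
  have h4Λ : (4:ℝ) * Λ ≠ 0 := mul_ne_zero (by norm_num) hΛ
  have hI3 : Complex.I ^ 3 = -Complex.I := by
    rw [pow_succ, Complex.I_sq]; ring
  have hexp : ((r : ℂ) + (b : ℝ) * Complex.I) ^ 3
      = (((r^3 - 3*r*b^2 : ℝ)) : ℂ) + (((3*r^2*b - b^3 : ℝ)) : ℂ) * Complex.I := by
    push_cast
    ring_nf
    rw [hI3, Complex.I_sq]
    ring
  rw [hexp, aux_complex_eq]
  have hbpow : b ^ 3 = a ^ 3 * Real.cos θ ^ 3 := by rw [hb]; ring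
  have hbr : (a / s) * Real.cos θ = b / s := by rw [hb]; ring
  constructor
  · rintro ⟨h1, h2⟩
    have h1' : (r^3 - 3*r*b^2) * Λ = -6*m := by
      field_simp at h1; linear_combination h1
    have h2' : b * (3*r^2 - b^2) = 0 := by linear_combination h2
    rcases mul_eq_zero.mp h2' with hb0 | hrb
    · -- b = 0 ⇒ cos θ = 0 ⇒ θ = π/2
      have hcos : Real.cos θ = 0 := by
        rw [hb] at hb0
        rcases mul_eq_zero.mp hb0 with h | h
        · exact absurd h (ne_of_gt ha)
        · exact h
      left
      refine ⟨?_, ?_⟩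
      · exact Real.injOn_cos ⟨hθ0, hθπ⟩
          ⟨by positivity, by linarith [Real.pi_pos]⟩
          (by rw [hcos, Real.cos_pi_div_two])
      · rw [hb0] at h1
        linear_combination h1
    · -- 3 r² = b²
      have hfac : (r - b / s) * (r + b / s) = 0 := by
        have h : r^2 - (b / s)^2 = 0 := by
          rw [div_pow, hs2]
          linear_combination ((1:ℝ)/3) * hrb
        linear_combination h
      rcases mul_eq_zero.mp hfac with h | h
      · have hr : r = b / s := by linarith
        have hb' : b = r * s := by rw [hr]; field_simp
        have h1'' : -8 * r^3 * Λ = -6*m := by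
          linear_combination h1' + 3*r*Λ*(b + r*s) * hb' + 3*r^3*Λ * hs2
        right; left
        refine ⟨?_, ?_⟩
        · rw [← hbpow, eq_div_iff h4Λ]
          linear_combination 4*Λ*(b^2 + b*r*s + r^2*s^2) * hb'
            + (-1/2)*s^3 * h1'' + 3*m*s * hs2
        · rw [hbr, hr]
      · have hr : r = -(b / s) := by linarith
        have hb' : b = -(r * s) := by rw [hr]; field_simp
        have h1'' : -8 * r^3 * Λ = -6*m := by
          linear_combination h1' + 3*r*Λ*(b - r*s) * hb' + 3*r^3*Λ * hs2
        right; right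
        refine ⟨?_, ?_⟩
        · rw [← hbpow, neg_div' , eq_div_iff h4Λ]
          linear_combination 4*Λ*(b^2 - b*r*s + r^2*s^2) * hb'
            + (1/2)*s^3 * h1'' + (-3)*m*s * hs2
        · rw [hr, neg_mul, hbr]
  · rintro (⟨hθ, hr⟩ | ⟨hc, hr⟩ | ⟨hc, hr⟩)
    · have hcos : Real.cos θ = 0 := by rw [hθ, Real.cos_pi_div_two]
      have hb0 : b = 0 := by rw [hb, hcos, mul_zero]
      rw [hb0]
      exact ⟨by linear_combination hr, by ring⟩
    · rw [← hbpow] at hc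
      rw [hbr] at hr
      have hb' : b = r * s := by rw [hr]; field_simp
      have hc' : b^3 * (4*Λ) = 9 * s * m := by
        rw [eq_div_iff h4Λ] at hc; linear_combination hc
      have hA : 4*r^3*Λ*s^3 = 9*s*m := by
        linear_combination hc' - 4*Λ*(b^2 + b*r*s + r^2*s^2) * hb'
      have hB : 4*r^3*Λ = 3*m := by
        have h0 : s * (12*r^3*Λ - 9*m) = 0 := by
          linear_combination hA - 4*r^3*Λ*hs3
        rcases mul_eq_zero.mp h0 with h | h
        · exact absurd h hs0
        · linarith
      refine ⟨?_, ?_⟩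
      · rw [eq_div_iff hΛ]
        linear_combination (-3*r*Λ*(b + r*s)) * hb' + (-3*r^3*Λ) * hs2 + (-2) * hB
      · linear_combination (-b*(b + r*s)) * hb' + (-b*r^2) * hs2
    · rw [← hbpow] at hc
      have hr' : r = -(b / s) := by rw [hr, neg_mul, hbr]
      have hb' : b = -(r * s) := by rw [hr']; field_simp
      have hc' : b^3 * (4*Λ) = -(9 * s * m) := by
        rw [show -(9 * s * m / (4*Λ)) = (-(9*s*m))/(4*Λ) by ring, eq_div_iff h4Λ] at hc
        linear_combination hc
      have hA : 4*r^3*Λ*s^3 = 9*s*m := by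
        linear_combination -hc' + 4*Λ*(b^2 - b*r*s + r^2*s^2) * hb'
      have hB : 4*r^3*Λ = 3*m := by
        have h0 : s * (12*r^3*Λ - 9*m) = 0 := by
          linear_combination hA - 4*r^3*Λ*hs3
        rcases mul_eq_zero.mp h0 with h | h
        · exact absurd h hs0
        · linarith
      refine ⟨?_, ?_⟩
      · rw [eq_div_iff hΛ]
        linear_combination (-3*r*Λ*(b - r*s)) * hb' + (-3*r^3*Λ) * hs2 + (-2) * hB
      · linear_combination (-b*(b - r*s)) * hb' + (-b*r^2) * hs2
end
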